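/- Let n, q, k be positive integers and let A₁, …, A_q be nonempty pairwise disjoint sets whose union is Fin n. If k ≥ 2q, then there exists a universal cycle for the set of strong passwords of length k, i.e., words w : Fin k → Fin n such that for every block index i ∈ {1, …, q} there is some position j with w(j) ∈ A_i. -/

import Mathlib

/- The finite set of words of length `k` over a finite alphabet `A`
satisfying a predicate `P`. -/
open Classical in
noncomputable def wordsOf {A : Type*} [Fintype A] {k : ℕ} (P : (Fin k → A) → Prop) :
    Finset (Fin k → A) :=
  Finset.univ.filter P

/-- A nonempty finite set `S` of words of length `k` over `A` admits a universal cycle: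
a function `c : ZMod S.card → A` such that `i ↦ (fun j => c (i + j))` is a bijection
from `ZMod S.card` onto `S`. -/
def HasUCycle {A : Type*} {k : ℕ} (S : Finset (Fin k → A)) : Prop :=
  ∃ c : ZMod S.card → A,
    Set.BijOn (fun i : ZMod S.card => fun j : Fin k => c (i + (j.val : ZMod S.card)))
      Set.univ ↑S

/-!
Cycle joining. Call a permutation `σ` of the set `S` of strong passwords a shift permutation if
every `σ x` continues the last `k - 1` letters of `x` by one letter. Rotation of words is one, and
a shift permutation with a single cycle gives a U-cycle by reading first letters along the cycle.
If a word `u` lies off the cycle of a fixed word `z` but its de Bruijn successor `v` in `S` lies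
on it, then `u` and `σ⁻¹ v` share their last `k - 1` letters, so composing `σ` with their
transposition is again a shift permutation, and it merges the two cycles. Hence a shift
permutation with the largest cycle through `z` is a single cycle, provided every strong password
reaches `z` inside `S`.

For `z = a₀ a₁ ⋯ a_{q-1} a₀ ⋯` with `aᵢ ∈ Aᵢ` and a strong password `x`, list the blocks as
`π 0, …, π (q-1)` so that block `π s` occurs in `x` at a position `≥ s`, and slide a window of
length `k` along `x ++ a_{π 0} ⋯ a_{π (q-1)} ++ z`: a window starting before `2q ≤ k` meets each
block in `x` or in the middle segment, and a later one contains a full period of `z`.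
-/

open Function Finset Relation

theorem Equiv.Perm.SameCycle.mul_swap {α : Type*} [Finite α] [DecidableEq α] {σ : Perm α}
    {x y a : α} (hya : σ.SameCycle y a) (hxy : ¬σ.SameCycle x y) :
    (σ * swap x y).SameCycle x a := by
  set τ := σ * swap x y
  have hne : ∀ i : ℕ, (σ ^ i) y ≠ x := fun i h =>
    hxy (h ▸ sameCycle_pow_left.2 (SameCycle.refl σ y))
  have hstart : τ.SameCycle x (σ y) := ⟨1, by simp [τ]⟩
  have hpow : ∀ i : ℕ, τ.SameCycle x ((σ ^ (i + 1)) y) := by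
    intro i
    induction i with
    | zero => simpa using hstart
    | succ i ih =>
      by_cases hfix : (σ ^ (i + 1)) y = y
      · rwa [pow_succ', Perm.mul_apply, hfix]
      · have : τ ((σ ^ (i + 1)) y) = (σ ^ (i + 1 + 1)) y := by
          rw [Perm.mul_apply, swap_apply_of_ne_of_ne (hne _) hfix, pow_succ' σ (i + 1),
            Perm.mul_apply]
        exact this ▸ ih.apply_right
  obtain ⟨i, hi, -, rfl⟩ := hya.exists_pow_eq''
  obtain ⟨j, rfl⟩ := Nat.exists_eq_succ_of_ne_zero hi.ne'
  exact hpow j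

theorem Equiv.Perm.card_filter_sameCycle_lt_mul_swap {α : Type*} [Fintype α] [DecidableEq α]
    {σ : Perm α} {z u y : α} (hzy : σ.SameCycle z y) (hzu : ¬σ.SameCycle z u) :
    #(univ.filter (σ.SameCycle z)) < #(univ.filter ((σ * swap u y).SameCycle z)) := by
  have hmerge : ∀ a, σ.SameCycle z a → (σ * swap u y).SameCycle u a := fun a ha =>
    (hzy.symm.trans ha).mul_swap fun huy => hzu (hzy.trans huy.symm)
  refine card_lt_card ((ssubset_iff_of_subset fun a ha => ?_).2 ⟨u, ?_, ?_⟩)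
  · simp only [mem_filter, mem_univ, true_and] at ha ⊢
    exact (hmerge z .rfl).symm.trans (hmerge a ha)
  · simpa using (hmerge z .rfl).symm
  · simpa using hzu

theorem Equiv.Perm.exists_equiv_zmod_of_forall_sameCycle {α : Type*} [Finite α] {σ : Perm α}
    {x : α} (h : ∀ y, σ.SameCycle x y) :
    ∃ f : ZMod (Nat.card α) ≃ α, ∀ i, f (i + 1) = σ (f i) := by
  have horbit : ∀ y, y ∈ MulAction.orbit (Subgroup.zpowers σ) x := fun y => by
    obtain ⟨i, rfl⟩ := h y
    exact ⟨⟨σ ^ i, i, rfl⟩, rfl⟩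
  let e := (subtypeUnivEquiv horbit).symm.trans (MulAction.orbitZPowersEquiv σ x)
  rw [Nat.card_congr e, Nat.card_zmod]
  refine ⟨e.symm, fun i => ?_⟩
  obtain ⟨i, rfl⟩ := ZMod.intCast_surjective i
  rw [← Int.cast_one, ← Int.cast_add, add_comm]
  simp only [e, Equiv.symm_trans_apply, Equiv.symm_symm, subtypeUnivEquiv_apply,
    MulAction.orbitZPowersEquiv_symm_apply', zpow_one_add, mul_smul]
  rfl

theorem Fin.val_le_val_of_strictMono {q m : ℕ} {f : Fin q → Fin m} (hf : StrictMono f)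
    (s : Fin q) : (s : ℕ) ≤ f s := by
  obtain ⟨s, hs⟩ := s
  induction s with
  | zero => exact Nat.zero_le _
  | succ s ih =>
    have hlt : f ⟨s, by omega⟩ < f ⟨s + 1, hs⟩ := hf (Fin.mk_lt_mk.2 (Nat.lt_succ_self s))
    have hs' : s ≤ f ⟨s, by omega⟩ := ih (by omega)
    rw [Fin.lt_def] at hlt
    exact Nat.succ_le_of_lt (hs'.trans_lt hlt)

theorem mem_wordsOf {α : Type*} [Fintype α] {k : ℕ} {P : (Fin k → α) → Prop}
    {w : Fin k → α} : w ∈ wordsOf P ↔ P w := by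
  simp [wordsOf]

section ShiftPerm

variable {α : Type*} {k : ℕ}

def ShiftAdj (u v : Fin (k + 1) → α) : Prop :=
  Fin.tail u = Fin.init v

def IsShiftPerm {S : Finset (Fin (k + 1) → α)} (σ : Equiv.Perm S) : Prop :=
  ∀ x, ShiftAdj x.1 (σ x).1

def window {m : ℕ} (s : ℕ → α) (T : ℕ) (j : Fin m) : α :=
  s (T + j)

theorem shiftAdj_window (s : ℕ → α) (T : ℕ) :
    ShiftAdj (window s T : Fin (k + 1) → α) (window s (T + 1)) := by
  funext j
  simp only [Fin.tail, Fin.init, window, Fin.val_succ, Fin.val_castSucc]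
  congr 1
  omega

variable {S : Finset (Fin (k + 1) → α)} {σ : Equiv.Perm S}

theorem IsShiftPerm.pow_apply_zero (hσ : IsShiftPerm σ) (x : S) (j : Fin (k + 1)) :
    ((σ ^ (j : ℕ)) x).1 0 = x.1 j := by
  induction j using Fin.induction generalizing x with
  | zero => rfl
  | succ j ih =>
    rw [Fin.val_succ, pow_succ, Equiv.Perm.mul_apply, ← Fin.val_castSucc, ih]
    exact (congrFun (hσ x) j).symm

theorem IsShiftPerm.mul_swap [DecidableEq S] (hσ : IsShiftPerm σ) {x y : S}
    (hxy : Fin.tail x.1 = Fin.tail y.1) : IsShiftPerm (σ * Equiv.swap x y) := by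
  intro a
  have htail : Fin.tail (Equiv.swap x y a).1 = Fin.tail a.1 := by
    rcases eq_or_ne a x with rfl | hax
    · rw [Equiv.swap_apply_left, hxy]
    rcases eq_or_ne a y with rfl | hay
    · rw [Equiv.swap_apply_right, hxy]
    · rw [Equiv.swap_apply_of_ne_of_ne hax hay]
  exact htail.symm.trans (hσ _)

theorem exists_isShiftPerm_of_rotate_mem (hS : ∀ x ∈ S, x ∘ finRotate (k + 1) ∈ S) :
    ∃ σ : Equiv.Perm S, IsShiftPerm σ := by
  have hinj : Injective fun x : S => (⟨x.1 ∘ finRotate (k + 1), hS x.1 x.2⟩ : S) :=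
    fun x y h => Subtype.ext <|
      (finRotate _).surjective.injective_comp_right (congrArg Subtype.val h)
  refine ⟨Equiv.ofBijective _ (Finite.injective_iff_bijective.1 hinj), fun x => ?_⟩
  funext j
  simp [Fin.tail, Fin.init, Fin.coeSucc_eq_succ]

theorem reflTransGen_shiftAdj_of_window_mem {s : ℕ → α} {N : ℕ} {x y : S}
    (hS : ∀ T ≤ N, window s T ∈ S) (hx : x.1 = window s 0) (hy : y.1 = window s N) :
    ReflTransGen (ShiftAdj on Subtype.val) x y := by
  induction N generalizing y with
  | zero => exact Subtype.ext (hx.trans hy.symm) ▸ ReflTransGen.refl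
  | succ N ih =>
    refine (ih (y := ⟨window s N, hS N (by omega)⟩) (fun T hT => hS T (by omega)) rfl).tail ?_
    change ShiftAdj _ y.1
    rw [hy]
    exact shiftAdj_window s N

theorem exists_isShiftPerm_forall_sameCycle {σ₀ : Equiv.Perm S} (hσ₀ : IsShiftPerm σ₀) (z : S)
    (hz : ∀ x, ReflTransGen (ShiftAdj on Subtype.val) x z) :
    ∃ σ : Equiv.Perm S, IsShiftPerm σ ∧ ∀ x, σ.SameCycle z x := by
  classical
  obtain ⟨σ, hσ, hmax⟩ := (univ.filter (IsShiftPerm (S := S))).exists_max_image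
    (fun σ => #(univ.filter (σ.SameCycle z))) ⟨σ₀, by simpa using hσ₀⟩
  rw [mem_filter] at hσ
  refine ⟨σ, hσ.2, fun x => (hz x).head_induction_on .rfl fun {u v} huv _ hv => ?_⟩
  by_contra hu
  set y := σ⁻¹ v
  have hyv : σ y = v := σ.apply_symm_apply v
  have hτ : IsShiftPerm (σ * Equiv.swap u y) := hσ.2.mul_swap (huv.trans (hyv ▸ hσ.2 y).symm)
  have hzy : σ.SameCycle z y := Equiv.Perm.sameCycle_apply_right.1 (hyv ▸ hv)
  exact (hmax _ (by simpa using hτ)).not_gt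
    (Equiv.Perm.card_filter_sameCycle_lt_mul_swap hzy hu)

theorem hasUCycle_of_isShiftPerm (hσ : IsShiftPerm σ) {z : S} (hz : ∀ x, σ.SameCycle z x) :
    HasUCycle S := by
  obtain ⟨f, hf⟩ := Equiv.Perm.exists_equiv_zmod_of_forall_sameCycle hz
  have hf_add : ∀ i (n : ℕ), f (i + n) = (σ ^ n) (f i) := by
    intro i n
    induction n with
    | zero => simp
    | succ n ih => rw [Nat.cast_succ, ← add_assoc, hf, ih, pow_succ', Equiv.Perm.mul_apply]
  unfold HasUCycle
  rw [← Nat.card_eq_finsetCard]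
  refine ⟨fun i => (f i).1 0, ?_⟩
  have hwindow : ∀ i, (fun j : Fin (k + 1) => (f (i + (j : ℕ))).1 0) = (f i).1 := fun i => by
    funext j
    rw [hf_add, hσ.pow_apply_zero]
  convert (show Set.BijOn (fun i => (f i).1) Set.univ S from
    ⟨fun i _ => (f i).2, fun i _ i' _ h => f.injective (Subtype.ext h),
      fun x hx => ⟨f.symm ⟨x, hx⟩, trivial, by simp⟩⟩) using 1
  exact funext hwindow

end ShiftPerm

section StrongPassword

variable {α : Type*} {q : ℕ}

def IsStrong (A : Fin q → Set α) {m : ℕ} (w : Fin m → α) : Prop :=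
  ∀ i, ∃ j, w j ∈ A i

variable {A : Fin q → Set α}

theorem IsStrong.comp_surjective {m m' : ℕ} {w : Fin m → α} (hw : IsStrong A w)
    {e : Fin m' → Fin m} (he : Surjective e) : IsStrong A (w ∘ e) := fun i => by
  obtain ⟨j, hj⟩ := hw i
  obtain ⟨j', rfl⟩ := he j
  exact ⟨j', hj⟩

theorem isStrong_window {m : ℕ} {s : ℕ → α} {T : ℕ}
    (h : ∀ i, ∃ p, T ≤ p ∧ p < T + m ∧ s p ∈ A i) : IsStrong A (window s T : Fin m → α) :=
  fun i => by
    obtain ⟨p, hTp, hpm, hp⟩ := h i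
    exact ⟨⟨p - T, by omega⟩, by simpa [window, Nat.add_sub_cancel' hTp] using hp⟩

theorem IsStrong.exists_perm_le_mem (hA : Pairwise (Disjoint on A)) {m : ℕ} {w : Fin m → α}
    (hw : IsStrong A w) :
    ∃ π : Equiv.Perm (Fin q), ∀ s : Fin q, ∃ j : Fin m, (s : ℕ) ≤ j ∧ w j ∈ A (π s) := by
  choose pos hpos using hw
  have hinj : Injective pos := fun i i' h =>
    hA.eq (Set.not_disjoint_iff.2 ⟨w (pos i), hpos i, h ▸ hpos i'⟩)
  set π := Tuple.sort pos
  have hmono : StrictMono (pos ∘ π) :=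
    (Tuple.monotone_sort pos).strictMono_of_injective (hinj.comp π.injective)
  exact ⟨π, fun s => ⟨pos (π s), Fin.val_le_val_of_strictMono hmono s, hpos _⟩⟩

theorem reflTransGen_shiftAdj_periodic [Fintype α] [NeZero q] (hA : Pairwise (Disjoint on A))
    {k : ℕ} (hk : 2 * q ≤ k + 1) {a : Fin q → α} (ha : ∀ i, a i ∈ A i)
    {x z : (wordsOf (IsStrong A) : Finset (Fin (k + 1) → α))}
    (hz : z.1 = fun j : Fin (k + 1) => a (Fin.ofNat q j)) :
    ReflTransGen (ShiftAdj on Subtype.val) x z := by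
  obtain ⟨π, hπ⟩ := (mem_wordsOf.1 x.2).exists_perm_le_mem hA
  set s : ℕ → α := fun t => if h : t < k + 1 then x.1 ⟨t, h⟩
    else if t < k + 1 + q then a (π (Fin.ofNat q (t - (k + 1))))
    else a (Fin.ofNat q (t - (k + 1 + q)))
  have hs_word : ∀ j : Fin (k + 1), s j = x.1 j := fun j => dif_pos j.isLt
  have hs_mid : ∀ i : Fin q, s (k + 1 + i) = a (π i) := fun i => by
    simp only [s, dif_neg (show ¬k + 1 + i < k + 1 by omega),
      if_pos (show k + 1 + i < k + 1 + q by omega), Nat.add_sub_cancel_left, Fin.ofNat_val_eq_self]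
  have hs_tail : ∀ t, s (k + 1 + q + t) = a (Fin.ofNat q t) := fun t => by
    simp only [s, dif_neg (show ¬k + 1 + q + t < k + 1 by omega),
      if_neg (show ¬k + 1 + q + t < k + 1 + q by omega), Nat.add_sub_cancel_left]
  refine reflTransGen_shiftAdj_of_window_mem (s := s) (N := k + 1 + q) (fun T hT => ?_) ?_ ?_
  · refine mem_wordsOf.2 (isStrong_window fun i => ?_)
    by_cases hT : 2 * q ≤ T
    · exact ⟨k + 1 + q + i, by omega, by omega, by simpa [hs_tail] using ha i⟩
    obtain ⟨r, rfl⟩ := π.surjective i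
    by_cases hrT : (r : ℕ) < T
    · exact ⟨k + 1 + r, by omega, by omega, by simpa [hs_mid] using ha _⟩
    · obtain ⟨j, hrj, hj⟩ := hπ r
      exact ⟨j, by omega, by omega, by simpa [hs_word] using hj⟩
  · funext j
    simp [window, hs_word]
  · funext j
    simp [window, hz, hs_tail]

theorem hasUCycle_wordsOf_isStrong [Fintype α] [NeZero q] (hne : ∀ i, (A i).Nonempty)
    (hA : Pairwise (Disjoint on A)) {k : ℕ} (hk : 2 * q ≤ k + 1) :
    HasUCycle (wordsOf (IsStrong A) : Finset (Fin (k + 1) → α)) := by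
  choose a ha using hne
  let z : (wordsOf (IsStrong A) : Finset (Fin (k + 1) → α)) := ⟨fun j => a (Fin.ofNat q j),
    mem_wordsOf.2 fun i => ⟨⟨i, by omega⟩, by simpa [Fin.ofNat_val_eq_self] using ha i⟩⟩
  obtain ⟨σ₀, hσ₀⟩ := exists_isShiftPerm_of_rotate_mem (S := wordsOf (IsStrong A)) fun x hx =>
    mem_wordsOf.2 (IsStrong.comp_surjective (mem_wordsOf.1 hx) (finRotate (k + 1)).surjective)
  obtain ⟨σ, hσ, hcycle⟩ := exists_isShiftPerm_forall_sameCycle hσ₀ z fun x =>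
    reflTransGen_shiftAdj_periodic hA hk ha rfl
  exact hasUCycle_of_isShiftPerm hσ hcycle

end StrongPassword

theorem ucycle_strong_passwords_general (n q k : ℕ) (hq : 1 ≤ q) (hk : 2 * q ≤ k)
    (A : Fin q → Finset (Fin n))
    (hne : ∀ i, (A i).Nonempty)
    (hdisj : ∀ i j, i ≠ j → Disjoint (A i) (A j)) :
    HasUCycle (wordsOf (fun w : Fin k → Fin n =>
      ∀ i : Fin q, ∃ j : Fin k, w j ∈ A i)) := by
  obtain ⟨k, rfl⟩ : ∃ m, k = m + 1 := ⟨k - 1, by omega⟩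
  have : NeZero q := ⟨by omega⟩
  exact hasUCycle_wordsOf_isStrong (A := fun i => (A i : Set (Fin n)))
    (fun i => Finset.coe_nonempty.2 (hne i))
    (fun i j hij => Finset.disjoint_coe.2 (hdisj i j hij)) (by omega)

/-- Given a partition of the alphabet `Fin n` into `q` nonempty pairwise disjoint
blocks `A i`, U-cycles of strong passwords of length `k` (words containing at least
one letter from each block) exist whenever `k ≥ 2q`. -/
theorem ucycle_strong_passwords (n q k : ℕ) (hn : 1 ≤ n) (hq : 1 ≤ q) (hk : 2 * q ≤ k)
    (A : Fin q → Finset (Fin n))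
    (hne : ∀ i, (A i).Nonempty)
    (hdisj : ∀ i j, i ≠ j → Disjoint (A i) (A j))
    (hcov : ∀ x : Fin n, ∃ i, x ∈ A i) :
    HasUCycle (wordsOf (fun w : Fin k → Fin n =>
      ∀ i : Fin q, ∃ j : Fin k, w j ∈ A i)) :=
  ucycle_strong_passwords_general n q k hq hk A hne hdisj
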